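/- arXiv:1603.02304 — 2 statements merged into one kernel-verified Lean document; each statement's English description precedes it below -/
import Mathlib

section
/- Let n ≥ 1 and define U: D^n × ℝ^n → ℂ (where D ⊂ ℝ² is the open unit disk) by U(x_1,y_1,…,x_n,y_n,ξ_1,…,ξ_n) = Ψ((x_1+iy_1,…,x_n+iy_n),(e^{iξ_1},…,e^{iξ_n})). Then for every index 1 ≤ j ≤ n and every point of the domain, (x_j·∂U/∂y_j - y_j·∂U/∂x_j) - ∂U/∂ξ_j + ∂U/∂ξ_{j+1} = 0, where ∂U/∂ξ_{n+1} is interpreted as 0. (The first expression is the angular derivative ∂U/∂θ_j in the polar angle θ_j of w_j = x_j + iy_j.) -/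
/-- `Ψ` composed over a list of `(w,z)` pairs, applied to `0`:
`PsiList [(w₁,z₁),…,(wₙ,zₙ)] = Ψ^{w₁}_{z₁} ∘ ⋯ ∘ Ψ^{wₙ}_{zₙ}(0)`, where
`Ψ^{w}_{z}(v) = z(v+w)/(1+conj(w)·v)`. -/
noncomputable def PsiList : List (ℂ × ℂ) → ℂ
  | [] => 0
  | wz :: rest => wz.2 * (PsiList rest + wz.1) / (1 + (starRingEnd ℂ) wz.1 * PsiList rest)

/-- `U(x₁,y₁,…,xₙ,yₙ,ξ₁,…,ξₙ) = Ψ((x₁+iy₁,…,xₙ+iyₙ),(e^{iξ₁},…,e^{iξₙ}))`. -/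
noncomputable def Ufun (n : ℕ) (x y ξ : Fin n → ℝ) : ℂ :=
  PsiList (List.ofFn fun j : Fin n =>
    ((x j : ℂ) + (y j : ℂ) * Complex.I, Complex.exp (Complex.I * (ξ j : ℂ))))

/-!
The maps `Ψ^w_z` are equivariant under rotations: `Ψ^w_{e z} = e Ψ^w_z` and
`Ψ^{e w}_{z / e}(e v) = Ψ^w_z(v)` for `|e| = 1`. Hence `U` does not change when `w_j` is rotated
by `e^{iθ}`, `ξ_j` is decreased by `θ` and `ξ_{j+1}` increased by `θ`: the shift of `ξ_{j+1}`
multiplies the value of the tail `Ψ^{w_{j+1}}_{z_{j+1}} ∘ ⋯ (0)` by `e^{iθ}` (if `j = n` this value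
is `0`), which the rotated `j`-th map absorbs. Since every denominator `1 + w̄ v` stays away from
`0` on `Dⁿ`, `U` is real-differentiable there, and differentiating the invariance at `θ = 0` by
the chain rule gives the identity.
-/

open Complex Function ComplexConjugate

/-- The paper's `Ψ^w_z(v)`. -/
noncomputable def psiMap (w z v : ℂ) : ℂ := z * (v + w) / (1 + conj w * v)

lemma PsiList_cons (wz : ℂ × ℂ) (L : List (ℂ × ℂ)) :
    PsiList (wz :: L) = psiMap wz.1 wz.2 (PsiList L) := by
  rw [PsiList, psiMap]

lemma one_add_conj_mul_ne_zero {w v : ℂ} (hw : ‖w‖ < 1) (hv : ‖v‖ < 1) :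
    1 + conj w * v ≠ 0 := by
  intro h
  have : ‖conj w * v‖ < 1 := by
    rw [norm_mul, norm_conj]; nlinarith [norm_nonneg w, norm_nonneg v]
  rw [eq_neg_of_add_eq_zero_right h, norm_neg, norm_one] at this
  exact this.false

lemma norm_psiMap_lt_one {w z v : ℂ} (hw : ‖w‖ < 1) (hz : ‖z‖ = 1) (hv : ‖v‖ < 1) :
    ‖psiMap w z v‖ < 1 := by
  have hd := one_add_conj_mul_ne_zero hw hv
  have hgap : normSq (1 + conj w * v) - normSq (v + w) = (1 - normSq w) * (1 - normSq v) := by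
    simp only [normSq_apply, add_re, add_im, mul_re, mul_im, one_re, one_im, conj_re, conj_im]
    ring
  have hw' : normSq w < 1 := by
    rw [normSq_eq_norm_sq]; exact pow_lt_one₀ (norm_nonneg w) hw two_ne_zero
  have hv' : normSq v < 1 := by
    rw [normSq_eq_norm_sq]; exact pow_lt_one₀ (norm_nonneg v) hv two_ne_zero
  rw [psiMap, norm_div, norm_mul, hz, one_mul, div_lt_one (norm_pos_iff.mpr hd)]
  refine lt_of_pow_lt_pow_left₀ 2 (norm_nonneg _) ?_
  rw [← normSq_eq_norm_sq, ← normSq_eq_norm_sq]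
  nlinarith

lemma psiMap_mul_left (w z v e : ℂ) : psiMap w (e * z) v = e * psiMap w z v := by
  simp only [psiMap, mul_assoc, mul_div_assoc]

lemma psiMap_rotate {e : ℂ} (he : ‖e‖ = 1) (w z v : ℂ) :
    psiMap (e * w) (z / e) (e * v) = psiMap w z v := by
  have he0 : e ≠ 0 := norm_ne_zero_iff.mp (by rw [he]; exact one_ne_zero)
  have hce : conj e * e = 1 := by rw [conj_mul', he]; norm_num
  have hden : 1 + conj (e * w) * (e * v) = 1 + conj w * v := by
    rw [map_mul]; linear_combination conj w * v * hce
  rw [psiMap, psiMap, hden, ← mul_add, ← mul_assoc, div_mul_cancel₀ z he0]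

lemma norm_PsiList_lt_one (L : List (ℂ × ℂ)) (hL : ∀ wz ∈ L, ‖wz.1‖ < 1 ∧ ‖wz.2‖ = 1) :
    ‖PsiList L‖ < 1 := by
  induction L with
  | nil => simp [PsiList]
  | cons wz L ih =>
    rw [PsiList_cons]
    obtain ⟨hw, hz⟩ := hL wz List.mem_cons_self
    exact norm_psiMap_lt_one hw hz (ih fun p hp => hL p (List.mem_cons_of_mem _ hp))

noncomputable def Ucomplex (n : ℕ) (w : Fin n → ℂ) (ξ : Fin n → ℝ) : ℂ :=
  PsiList (List.ofFn fun k => (w k, exp (I * ξ k)))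

lemma Ufun_eq_Ucomplex (n : ℕ) (x y ξ : Fin n → ℝ) :
    Ufun n x y ξ = Ucomplex n (fun k => x k + y k * I) ξ := rfl

lemma Ucomplex_zero (w : Fin 0 → ℂ) (ξ : Fin 0 → ℝ) : Ucomplex 0 w ξ = 0 := by
  simp [Ucomplex, PsiList]

lemma Ucomplex_succ {n : ℕ} (w : Fin (n + 1) → ℂ) (ξ : Fin (n + 1) → ℝ) :
    Ucomplex (n + 1) w ξ = psiMap (w 0) (exp (I * ξ 0)) (Ucomplex n (Fin.tail w) (Fin.tail ξ)) := by
  rw [Ucomplex, List.ofFn_succ, PsiList_cons]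
  rfl

lemma norm_Ucomplex_lt_one {n : ℕ} {w : Fin n → ℂ} (hw : ∀ k, ‖w k‖ < 1) (ξ : Fin n → ℝ) :
    ‖Ucomplex n w ξ‖ < 1 := by
  refine norm_PsiList_lt_one _ fun wz hwz => ?_
  obtain ⟨k, rfl⟩ := List.mem_ofFn.mp hwz
  exact ⟨hw k, by rw [norm_exp_I_mul_ofReal]⟩

/-- Identically `0` when `n ≤ i`; this encodes the convention `∂U/∂ξ_{n+1} = 0`. -/
def natIndicator (n i : ℕ) : Fin n → ℝ := fun k => if (k : ℕ) = i then 1 else 0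

lemma Ucomplex_add_smul_natIndicator_zero {n : ℕ} (w : Fin n → ℂ) (ξ : Fin n → ℝ) (θ : ℝ) :
    Ucomplex n w (ξ + θ • natIndicator n 0) = exp (I * θ) * Ucomplex n w ξ := by
  cases n with
  | zero => simp [Ucomplex_zero]
  | succ n =>
    have htail : Fin.tail (ξ + θ • natIndicator (n + 1) 0) = Fin.tail ξ := by
      funext k; simp [Fin.tail, natIndicator]
    rw [Ucomplex_succ, Ucomplex_succ, htail, ← psiMap_mul_left, ← exp_add]
    congr 2
    simp only [Pi.add_apply, Pi.smul_apply, natIndicator, Fin.coe_ofNat_eq_mod, Nat.zero_mod,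
      if_pos, smul_eq_mul, mul_one, ofReal_add]
    ring

lemma Ucomplex_rotate {n : ℕ} (w : Fin n → ℂ) (ξ : Fin n → ℝ) (j : Fin n) (θ : ℝ) :
    Ucomplex n (update w j (exp (I * θ) * w j))
      (ξ + θ • (natIndicator n (j + 1) - natIndicator n j)) = Ucomplex n w ξ := by
  induction n with
  | zero => exact j.elim0
  | succ n ih =>
    induction j using Fin.cases with
    | zero =>
      have htail : Fin.tail (ξ + θ • (natIndicator (n + 1) 1 - natIndicator (n + 1) 0)) =
          Fin.tail ξ + θ • natIndicator n 0 := by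
        funext k; simp [Fin.tail, natIndicator]
      rw [Ucomplex_succ, Ucomplex_succ, Fin.val_zero, zero_add, htail, Fin.tail_update_zero,
        Ucomplex_add_smul_natIndicator_zero]
      convert psiMap_rotate (norm_exp_I_mul_ofReal θ) (w 0) (exp (I * ξ 0)) _ using 2
      · simp
      · simp only [Pi.add_apply, Pi.smul_apply, Pi.sub_apply, natIndicator, Fin.coe_ofNat_eq_mod,
          Nat.zero_mod, zero_ne_one, if_pos, if_false, smul_eq_mul, ofReal_add, ofReal_mul,
          ofReal_sub, ofReal_zero, ofReal_one, ← exp_sub]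
        ring_nf
    | succ j =>
      have htail : Fin.tail (ξ + θ • (natIndicator (n + 1) (j.succ + 1) -
          natIndicator (n + 1) j.succ)) = Fin.tail ξ + θ • (natIndicator n (j + 1) -
          natIndicator n j) := by
        funext k; simp [Fin.tail, natIndicator]
      have hhead : (ξ + θ • (natIndicator (n + 1) (j.succ + 1) -
          natIndicator (n + 1) j.succ)) 0 = ξ 0 := by
        simp [natIndicator]
      rw [Ucomplex_succ, Ucomplex_succ, htail, hhead, Fin.tail_update_succ,
        update_of_ne (Fin.succ_ne_zero j).symm]
      exact congrArg _ (ih (Fin.tail w) (Fin.tail ξ) j)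

lemma DifferentiableAt.psiMap {E : Type*} [NormedAddCommGroup E] [NormedSpace ℝ E]
    {w z v : E → ℂ} {q : E} (hw : DifferentiableAt ℝ w q) (hz : DifferentiableAt ℝ z q)
    (hv : DifferentiableAt ℝ v q) (hd : 1 + conj (w q) * v q ≠ 0) :
    DifferentiableAt ℝ (fun p => psiMap (w p) (z p) (v p)) q := by
  simp only [_root_.psiMap, div_eq_mul_inv]
  have hcw : DifferentiableAt ℝ (fun p => conj (w p)) q := hw.star
  exact (hz.fun_mul (hv.fun_add hw)).fun_mul (((hcw.fun_mul hv).const_add 1).fun_inv hd)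

lemma differentiableAt_Ucomplex {n : ℕ} {q : (Fin n → ℂ) × (Fin n → ℝ)}
    (hq : ∀ k, ‖q.1 k‖ < 1) :
    DifferentiableAt ℝ (uncurry (Ucomplex n)) q := by
  induction n with
  | zero => simp only [uncurry_def, Ucomplex_zero]; exact differentiableAt_const 0
  | succ n ih =>
    simp only [uncurry_def, Ucomplex_succ]
    have htail : DifferentiableAt ℝ (fun p : (Fin (n + 1) → ℂ) × (Fin (n + 1) → ℝ) =>
        Ucomplex n (Fin.tail p.1) (Fin.tail p.2)) q := by
      refine (ih (q := (Fin.tail q.1, Fin.tail q.2)) fun k => hq k.succ).comp q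
        (f := fun p => (Fin.tail p.1, Fin.tail p.2)) ?_
      unfold Fin.tail; fun_prop
    exact DifferentiableAt.psiMap (by fun_prop) (by fun_prop) htail
      (one_add_conj_mul_ne_zero (hq 0) (norm_Ucomplex_lt_one (fun k => hq k.succ) _))

lemma natIndicator_val {n : ℕ} (j : Fin n) : natIndicator n j = Pi.single j 1 := by
  funext k; simp [natIndicator, Pi.single_apply, Fin.val_inj]

lemma natIndicator_of_le {n i : ℕ} (h : n ≤ i) : natIndicator n i = 0 := by
  funext k; simp [natIndicator, (k.2.trans_le h).ne]

lemma HasDerivAt.update {ι F : Type*} [Fintype ι] [DecidableEq ι] [NormedAddCommGroup F]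
    [NormedSpace ℝ F] (v : ι → F) (i : ι) {f : ℝ → F} {f' : F} {t : ℝ} (hf : HasDerivAt f f' t) :
    HasDerivAt (fun s => Function.update v i (f s)) (Pi.single i f') t := by
  rw [hasDerivAt_pi]
  intro k
  rcases eq_or_ne k i with rfl | hk
  · simpa using hf
  · simpa [hk] using hasDerivAt_const t (v k)

section Partials

variable {n : ℕ} {w : Fin n → ℂ} {ξ : Fin n → ℝ} {L : (Fin n → ℂ) × (Fin n → ℝ) →L[ℝ] ℂ}

lemma HasFDerivAt.hasDerivAt_Ucomplex_update_fst (hL : HasFDerivAt (uncurry (Ucomplex n)) L (w, ξ))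
    (j : Fin n) {f : ℝ → ℂ} {f' : ℂ} {t : ℝ} (hf : HasDerivAt f f' t) (hft : f t = w j) :
    HasDerivAt (fun s => Ucomplex n (update w j (f s)) ξ) (L (Pi.single j f', 0)) t :=
  hL.comp_hasDerivAt_of_eq t ((hf.update w j).prodMk (hasDerivAt_const t ξ)) (by simp [hft])

lemma HasFDerivAt.hasDerivAt_Ucomplex_update_snd (hL : HasFDerivAt (uncurry (Ucomplex n)) L (w, ξ))
    (j : Fin n) : HasDerivAt (fun t => Ucomplex n w (update ξ j t)) (L (0, Pi.single j 1)) (ξ j) :=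
  hL.comp_hasDerivAt_of_eq (ξ j) ((hasDerivAt_const _ w).prodMk ((hasDerivAt_id _).update ξ j))
    (by simp)

lemma HasFDerivAt.Ucomplex_rotation_eq_zero (hL : HasFDerivAt (uncurry (Ucomplex n)) L (w, ξ))
    (j : Fin n) : L (Pi.single j (I * w j), natIndicator n (j + 1) - natIndicator n j) = 0 := by
  have hrot : HasDerivAt (fun θ : ℝ => cexp (I * θ) * w j) (I * w j) 0 := by
    simpa using (((ofRealCLM.hasDerivAt (x := 0)).const_mul I).cexp).mul_const (w j)
  have hcurve := hL.comp_hasDerivAt_of_eq 0 ((hrot.update w j).prodMk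
    (((hasDerivAt_id (0 : ℝ)).smul_const (natIndicator n (j + 1) - natIndicator n j)).const_add ξ))
    (by simp)
  simp only [comp_def, uncurry_apply_pair, Ucomplex_rotate, one_smul, id] at hcurve
  exact hcurve.unique (hasDerivAt_const _ _)

end Partials

lemma ofReal_add_mul_I_update {n : ℕ} (x y : Fin n → ℝ) (j : Fin n) (a b : ℝ) :
    (fun k => (update x j a k : ℂ) + update y j b k * I) =
      update (fun k => (x k : ℂ) + y k * I) j (a + b * I) := by
  funext k; exact apply_update₂ (fun _ (a b : ℝ) => (a : ℂ) + b * I) x y j a b k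

section UfunPartials

variable {n : ℕ} {x y ξ : Fin n → ℝ} {L : (Fin n → ℂ) × (Fin n → ℝ) →L[ℝ] ℂ}

lemma HasFDerivAt.hasDerivAt_Ufun_update_x
    (hL : HasFDerivAt (uncurry (Ucomplex n)) L (fun k => x k + y k * I, ξ)) (j : Fin n) :
    HasDerivAt (fun t => Ufun n (update x j t) y ξ) (L (Pi.single j 1, 0)) (x j) := by
  have h : ∀ t, Ufun n (update x j t) y ξ =
      Ucomplex n (update (fun k => (x k : ℂ) + y k * I) j (t + y j * I)) ξ := fun t => by
    rw [Ufun_eq_Ucomplex, ← ofReal_add_mul_I_update, update_eq_self]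
  simp only [h]
  exact hL.hasDerivAt_Ucomplex_update_fst j (ofRealCLM.hasDerivAt.add_const _) rfl

lemma HasFDerivAt.hasDerivAt_Ufun_update_y
    (hL : HasFDerivAt (uncurry (Ucomplex n)) L (fun k => x k + y k * I, ξ)) (j : Fin n) :
    HasDerivAt (fun t => Ufun n x (update y j t) ξ) (L (Pi.single j I, 0)) (y j) := by
  have h : ∀ t, Ufun n x (update y j t) ξ =
      Ucomplex n (update (fun k => (x k : ℂ) + y k * I) j (x j + t * I)) ξ := fun t => by
    rw [Ufun_eq_Ucomplex, ← ofReal_add_mul_I_update, update_eq_self]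
  simp only [h]
  simpa using hL.hasDerivAt_Ucomplex_update_fst j
    ((ofRealCLM.hasDerivAt.mul_const I).const_add _) rfl

lemma HasFDerivAt.hasDerivAt_Ufun_update_ξ
    (hL : HasFDerivAt (uncurry (Ucomplex n)) L (fun k => x k + y k * I, ξ)) (j : Fin n) :
    HasDerivAt (fun t => Ufun n x y (update ξ j t)) (L (0, Pi.single j 1)) (ξ j) :=
  hL.hasDerivAt_Ucomplex_update_snd j

lemma HasFDerivAt.Ufun_rotation_eq_zero
    (hL : HasFDerivAt (uncurry (Ucomplex n)) L (fun k => x k + y k * I, ξ)) (j : Fin n) :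
    x j * L (Pi.single j I, 0) - y j * L (Pi.single j 1, 0) - L (0, Pi.single j 1) +
      L (0, natIndicator n (j + 1)) = 0 := by
  have hdir : ((Pi.single j (I * (x j + y j * I)) : Fin n → ℂ),
      natIndicator n (j + 1) - natIndicator n j) =
      x j • ((Pi.single j I : Fin n → ℂ), 0) - y j • ((Pi.single j 1 : Fin n → ℂ), 0) -
        (0, Pi.single j 1) + (0, natIndicator n (j + 1)) := by
    rw [natIndicator_val]
    ext k
    · rcases eq_or_ne k j with rfl | hk
      · simp only [Prod.fst_add, Prod.fst_sub, Prod.smul_fst, Pi.add_apply, Pi.sub_apply,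
          Pi.smul_apply, Pi.single_eq_same, Pi.zero_apply, real_smul]
        linear_combination (y k : ℂ) * I_sq
      · simp [hk]
    · simp only [Prod.smul_mk, smul_zero, Prod.mk_sub_mk, Prod.mk_add_mk, Pi.add_apply,
        Pi.sub_apply]
      ring
  have h := hL.Ucomplex_rotation_eq_zero j
  rwa [hdir, map_add, map_sub, map_sub, map_smul, map_smul, real_smul, real_smul] at h

end UfunPartials

theorem statement14_general (n : ℕ) (x y ξ : Fin n → ℝ)
    (hxy : ∀ j, (x j) ^ 2 + (y j) ^ 2 < 1) (j : Fin n) :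
    ((x j : ℂ) * deriv (fun t : ℝ => Ufun n x (Function.update y j t) ξ) (y j) -
        (y j : ℂ) * deriv (fun t : ℝ => Ufun n (Function.update x j t) y ξ) (x j)) -
      deriv (fun t : ℝ => Ufun n x y (Function.update ξ j t)) (ξ j) +
      (if h : (j : ℕ) + 1 < n then
          deriv (fun t : ℝ => Ufun n x y (Function.update ξ ⟨(j : ℕ) + 1, h⟩ t))
            (ξ ⟨(j : ℕ) + 1, h⟩)
        else 0) = 0 := by
  have hw : ∀ k, ‖(x k : ℂ) + y k * I‖ < 1 := fun k => by
    rw [norm_add_mul_I, Real.sqrt_lt' one_pos, one_pow]; exact hxy k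
  obtain ⟨L, hL⟩ : ∃ L, HasFDerivAt (uncurry (Ucomplex n)) L (fun k => x k + y k * I, ξ) :=
    ⟨_, (differentiableAt_Ucomplex hw).hasFDerivAt⟩
  have hnext : (if h : (j : ℕ) + 1 < n then
      deriv (fun t : ℝ => Ufun n x y (Function.update ξ ⟨(j : ℕ) + 1, h⟩ t)) (ξ ⟨(j : ℕ) + 1, h⟩)
      else 0) = L (0, natIndicator n (j + 1)) := by
    split_ifs with h
    · rw [(hL.hasDerivAt_Ufun_update_ξ _).deriv, ← natIndicator_val]
    · rw [natIndicator_of_le (not_lt.mp h), Prod.mk_zero_zero, map_zero]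
  rw [(hL.hasDerivAt_Ufun_update_x j).deriv, (hL.hasDerivAt_Ufun_update_y j).deriv,
    (hL.hasDerivAt_Ufun_update_ξ j).deriv, hnext]
  exact hL.Ufun_rotation_eq_zero j

/-- for every `1 ≤ j ≤ n` and every point of `Dⁿ × ℝⁿ`,
`(x_j·∂U/∂y_j - y_j·∂U/∂x_j) - ∂U/∂ξ_j + ∂U/∂ξ_{j+1} = 0`, with `∂U/∂ξ_{n+1}`
interpreted as `0`.  (The first expression is the angular derivative `∂U/∂θ_j`.) -/
theorem statement14 (n : ℕ) (hn : 1 ≤ n) (x y ξ : Fin n → ℝ)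
    (hxy : ∀ j, (x j) ^ 2 + (y j) ^ 2 < 1) (j : Fin n) :
    ((x j : ℂ) * deriv (fun t : ℝ => Ufun n x (Function.update y j t) ξ) (y j) -
        (y j : ℂ) * deriv (fun t : ℝ => Ufun n (Function.update x j t) y ξ) (x j)) -
      deriv (fun t : ℝ => Ufun n x y (Function.update ξ j t)) (ξ j) +
      (if h : (j : ℕ) + 1 < n then
          deriv (fun t : ℝ => Ufun n x y (Function.update ξ ⟨(j : ℕ) + 1, h⟩ t))
            (ξ ⟨(j : ℕ) + 1, h⟩)
        else 0) = 0 :=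
  statement14_general n x y ξ hxy j
end

section
/- Let n ≥ 1 and l = (l_1,…,l_n) ∈ ℤ^n. For r ∈ [0,1)^n define g_l(r) = (2π)^{-n} ∫_{[0,2π]^n} Ψ((r_1 e^{iθ_1},…,r_n e^{iθ_n}),(1,…,1)) · e^{-i(l_1θ_1+⋯+l_nθ_n)} dθ. If g_l(r) ≠ 0 for some r ∈ [0,1)^n, then: (i) for every 1 ≤ j ≤ n, l_1 + ⋯ + l_j ≤ 1; (ii) l_1 + ⋯ + l_n = 1; and (iii) for every 1 ≤ j ≤ n-1, if l_1 + ⋯ + l_j = 1 then l_1 + ⋯ + l_{j+1} = 1. -/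
open MeasureTheory

/-!
Since `Ψ^{aζ}_1(z) = ζ · Ψ^a_1(z ζ̄)` for `|ζ| = 1`, and `(Ψ^a_1)^p` is holomorphic on a disc of
radius `> 1` when `|a| < 1`, expanding it in its Taylor series shows that the `l`-th Fourier
coefficient in `θ` of `Ψ^{a e^{iθ}}_1(z)^p` is `c · z^(p - l)`, where `c = 0` unless `l ≤ p`,
and unless `l = 0` when `p = 0`. Integrating out `θ₁` first, the `l`-th coefficient of
`Ψ(r e^{iθ}, 1)^p` is therefore `c` times the `(l₂, …, lₙ)`-th coefficient of the same function
of `n - 1` variables raised to the power `p - l₁`. By induction on `n`, a nonzero coefficient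
forces the partial sums of `l` to climb to `p` without ever exceeding it, and to stay at `p` once
they reach it.
-/

open Complex ComplexConjugate
open scoped Real

-- `mobius a` is the map `Ψ^a_1`.
noncomputable def mobius (a z : ℂ) : ℂ := (z + a) / (1 + conj a * z)

noncomputable def phi : (n : ℕ) → (Fin n → ℂ) → ℂ
  | 0, _ => 0
  | n + 1, w => mobius (w 0) (phi n (Fin.tail w))

theorem psiList_ofFn_eq_phi (n : ℕ) (w : Fin n → ℂ) :
    PsiList (List.ofFn fun j => (w j, 1)) = phi n w := by
  induction n with
  | zero => rfl
  | succ n ih => simp [List.ofFn_succ, PsiList, phi, mobius, ← ih, Fin.tail]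

theorem normSq_one_add_conj_mul_sub_normSq_add (a z : ℂ) :
    normSq (1 + conj a * z) - normSq (z + a) = (1 - normSq a) * (1 - normSq z) := by
  simp only [normSq_apply, add_re, add_im, mul_re, mul_im, conj_re, conj_im, one_re, one_im]
  ring

theorem norm_mobius_le_one {a z : ℂ} (ha : ‖a‖ ≤ 1) (hz : ‖z‖ ≤ 1) : ‖mobius a z‖ ≤ 1 := by
  rcases eq_or_ne (1 + conj a * z) 0 with h | h
  · simp [mobius, h]
  rw [mobius, norm_div, div_le_one (norm_pos_iff.2 h), ← sq_le_sq₀ (norm_nonneg _) (norm_nonneg _),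
    ← normSq_eq_norm_sq, ← normSq_eq_norm_sq]
  have ha' : normSq a ≤ 1 := by rw [normSq_eq_norm_sq]; exact pow_le_one₀ (norm_nonneg _) ha
  have hz' : normSq z ≤ 1 := by rw [normSq_eq_norm_sq]; exact pow_le_one₀ (norm_nonneg _) hz
  linarith [normSq_one_add_conj_mul_sub_normSq_add a z,
    mul_nonneg (sub_nonneg.2 ha') (sub_nonneg.2 hz')]

theorem norm_phi_le_one {n : ℕ} {w : Fin n → ℂ} (hw : ∀ j, ‖w j‖ ≤ 1) : ‖phi n w‖ ≤ 1 := by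
  induction n with
  | zero => simp [phi]
  | succ n ih => exact norm_mobius_le_one (hw 0) (ih fun j => hw j.succ)

theorem measurable_phi (n : ℕ) : Measurable (phi n) := by
  induction n with
  | zero => exact measurable_const
  | succ n ih =>
    have : Measurable fun w : Fin (n + 1) → ℂ => phi n (Fin.tail w) :=
      ih.comp (measurable_pi_lambda _ fun j => measurable_pi_apply j.succ)
    change Measurable fun w : Fin (n + 1) → ℂ => mobius (w 0) (phi n (Fin.tail w))
    unfold mobius
    fun_prop

theorem mobius_mul_of_norm_eq_one {ζ : ℂ} (hζ : ‖ζ‖ = 1) (a z : ℂ) :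
    mobius (a * ζ) z = ζ * mobius a (z * conj ζ) := by
  have hζζ : ζ * conj ζ = 1 := by rw [mul_conj, normSq_eq_norm_sq, hζ]; norm_num
  rw [mobius, mobius, mul_div_assoc', map_mul]
  congr 1
  · linear_combination -z * hζζ
  · ring

theorem exists_hasSum_mobius_pow {a : ℂ} (ha : ‖a‖ < 1) (p : ℕ) :
    ∃ c : ℕ → ℂ, Summable (fun k => ‖c k‖) ∧
      ∀ z, ‖z‖ ≤ 1 → HasSum (fun k => c k * z ^ k) (mobius a z ^ p) := by
  -- A radius `R > 1` with `‖a‖ * R < 1` keeps the pole `-1 / conj a` outside the closed disc.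
  obtain ⟨R, hR, haR⟩ : ∃ R : NNReal, 1 < (R : ℝ) ∧ ‖a‖ * R < 1 := by
    refine ⟨⟨2 / (1 + ‖a‖), by positivity⟩, ?_, ?_⟩
    · change 1 < 2 / (1 + ‖a‖)
      rw [lt_div_iff₀ (by positivity)]; linarith
    · change ‖a‖ * (2 / (1 + ‖a‖)) < 1
      rw [mul_div_assoc', div_lt_one (by positivity)]; linarith
  have hdiff : DifferentiableOn ℂ (fun z => mobius a z ^ p) (Metric.closedBall 0 R) := by
    intro z hz
    have hden : 1 + conj a * z ≠ 0 := by
      intro h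
      have : ‖conj a * z‖ < 1 := by
        rw [norm_mul, RCLike.norm_conj]
        exact lt_of_le_of_lt (mul_le_mul_of_nonneg_left (mem_closedBall_zero_iff.1 hz)
          (norm_nonneg _)) haR
      rw [eq_neg_of_add_eq_zero_right h, norm_neg, norm_one] at this
      exact lt_irrefl _ this
    unfold mobius
    fun_prop (disch := exact hden)
  have hps := hdiff.hasFPowerSeriesOnBall (by exact_mod_cast zero_lt_one.trans hR)
  refine ⟨(cauchyPowerSeries (fun z => mobius a z ^ p) 0 R).coeff, ?_, fun z hz => ?_⟩
  · have := (cauchyPowerSeries (fun z => mobius a z ^ p) 0 R).summable_norm_mul_pow (r := 1)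
      (lt_of_lt_of_le (by exact_mod_cast hR) hps.r_le)
    simpa [FormalMultilinearSeries.norm_apply_eq_norm_coef] using this
  · have hz' : z ∈ Metric.eball (0 : ℂ) R := by
      rw [Metric.mem_eball, edist_zero_right, enorm_eq_nnnorm, ENNReal.coe_lt_coe,
        ← NNReal.coe_lt_coe, coe_nnnorm]
      exact lt_of_le_of_lt hz hR
    simpa [FormalMultilinearSeries.apply_eq_pow_smul_coeff, mul_comm] using hps.hasSum hz'

theorem integral_exp_I_mul_int_mul (k : ℤ) :
    ∫ θ in Set.Icc 0 (2 * π), cexp (I * (k * θ)) = if k = 0 then (2 * π : ℂ) else 0 := by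
  rw [integral_Icc_eq_integral_Ioc, ← intervalIntegral.integral_of_le Real.two_pi_pos.le]
  split_ifs with hk
  · simp [hk]
  have hc : I * k ≠ 0 := mul_ne_zero I_ne_zero (Int.cast_ne_zero.2 hk)
  simp_rw [← mul_assoc, integral_exp_mul_complex hc]
  have : cexp (I * k * (2 * π)) = 1 := by
    rw [← exp_int_mul_two_pi_mul_I k]; ring_nf
  simp [this]

theorem norm_exp_I_mul_int_mul (k : ℤ) (θ : ℝ) : ‖cexp (I * (k * θ))‖ = 1 := by
  rw [← ofReal_intCast, ← ofReal_mul, norm_exp_I_mul_ofReal]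

theorem integral_tsum_mul_exp_I_mul {b : ℕ → ℂ} (hb : Summable fun k => ‖b k‖) (m : ℤ) :
    ∫ θ in Set.Icc 0 (2 * π), ∑' k, b k * cexp (I * ((m - k : ℤ) * θ))
      = if 0 ≤ m then 2 * π * b m.toNat else 0 := by
  have hint : ∀ k : ℕ, Integrable (fun θ : ℝ => b k * cexp (I * ((m - k : ℤ) * θ)))
      (volume.restrict (Set.Icc 0 (2 * π))) := fun k =>
    (by fun_prop : Continuous _).integrableOn_Icc
  have hnorm : ∀ k : ℕ, ∫ θ in Set.Icc 0 (2 * π), ‖b k * cexp (I * ((m - k : ℤ) * θ))‖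
      = 2 * π * ‖b k‖ := fun k => by
    simp_rw [norm_mul, norm_exp_I_mul_int_mul, mul_one, setIntegral_const,
      Real.volume_real_Icc_of_le Real.two_pi_pos.le, smul_eq_mul, sub_zero]
  rw [← integral_tsum_of_summable_integral_norm hint
    (by simpa only [hnorm] using hb.mul_left (2 * π))]
  simp_rw [integral_const_mul, integral_exp_I_mul_int_mul, mul_ite, mul_zero, sub_eq_zero]
  split_ifs with hm
  · rw [tsum_eq_single m.toNat fun k hk => if_neg (by omega), if_pos (by omega), mul_comm]
  · have hne : ∀ k : ℕ, ¬ m = k := by omega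
    simp only [hne, if_false, tsum_zero]

theorem exp_I_mul_pow_mul_conj_pow (θ : ℝ) (m k : ℕ) (l : ℤ) :
    cexp (I * θ) ^ m * conj (cexp (I * θ)) ^ k * cexp (-I * (l * θ))
      = cexp (I * ((m - l - k : ℤ) * θ)) := by
  rw [← exp_conj, ← exp_nat_mul, ← exp_nat_mul, ← exp_add, ← exp_add, map_mul, conj_I,
    conj_ofReal]
  push_cast
  ring_nf

theorem exists_integral_mobius_pow_mul_exp {a : ℂ} (ha : ‖a‖ < 1) (p : ℕ) (l : ℤ) :
    ∃ c : ℂ, (c ≠ 0 → l ≤ p ∧ (p = 0 → l = 0)) ∧ ∀ z : ℂ, ‖z‖ ≤ 1 →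
      ∫ θ in Set.Icc 0 (2 * π), mobius (a * cexp (I * θ)) z ^ p * cexp (-I * (l * θ))
        = c * z ^ (p - l).toNat := by
  rcases Nat.eq_zero_or_pos p with rfl | hp
  · refine ⟨if l = 0 then 2 * π else 0, fun h => ?_, fun z _ => ?_⟩
    · have hl : l = 0 := by by_contra hl; simp [hl] at h
      exact ⟨hl.le, fun _ => hl⟩
    · have hexp := fun θ => exp_I_mul_pow_mul_conj_pow θ 0 0 l
      simp only [pow_zero, one_mul] at hexp
      simp_rw [pow_zero, one_mul, hexp, integral_exp_I_mul_int_mul]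
      split_ifs <;> simp_all
  obtain ⟨c, hc, hsum⟩ := exists_hasSum_mobius_pow ha p
  refine ⟨if 0 ≤ (p : ℤ) - l then 2 * π * c (p - l).toNat else 0,
    fun h => ⟨by_contra fun hl => h (if_neg (by omega)), by omega⟩, fun z hz => ?_⟩
  have hpt : ∀ θ : ℝ, mobius (a * cexp (I * θ)) z ^ p * cexp (-I * (l * θ))
      = ∑' k, c k * z ^ k * cexp (I * ((p - l - k : ℤ) * θ)) := fun θ => by
    have hz' : ‖z * conj (cexp (I * θ))‖ ≤ 1 := by
      rwa [norm_mul, RCLike.norm_conj, norm_exp_I_mul_ofReal, mul_one]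
    rw [mobius_mul_of_norm_eq_one (norm_exp_I_mul_ofReal θ), mul_pow, ← (hsum _ hz').tsum_eq,
      ← tsum_mul_left, ← tsum_mul_right]
    congr with k
    rw [← exp_I_mul_pow_mul_conj_pow]
    ring
  have hb : Summable fun k => ‖c k * z ^ k‖ :=
    Summable.of_nonneg_of_le (fun _ => norm_nonneg _) (fun k => by
      rw [norm_mul, norm_pow]
      exact mul_le_of_le_one_right (norm_nonneg _) (pow_le_one₀ (norm_nonneg _) hz)) hc
  simp_rw [hpt]
  rw [integral_tsum_mul_exp_I_mul hb, ite_mul, zero_mul]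
  simp only [mul_assoc]

theorem integral_pi_fin_succ {n : ℕ} {α : Type*} [MeasurableSpace α]
    (μ : Fin (n + 1) → Measure α) [∀ i, SigmaFinite (μ i)] {E : Type*} [NormedAddCommGroup E]
    [NormedSpace ℝ E] {f : (Fin (n + 1) → α) → E} (hf : Integrable f (Measure.pi μ)) :
    ∫ x, f x ∂Measure.pi μ = ∫ y, ∫ x, f (Fin.cons x y) ∂μ 0 ∂Measure.pi fun j => μ j.succ := by
  set e := (MeasurableEquiv.piFinSuccAbove (fun _ => α) 0).symm
  have hmp : MeasurePreserving e _ _ := (measurePreserving_piFinSuccAbove μ 0).symm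
  rw [← hmp.integral_comp', integral_prod_symm (fun z => f (e z))
    ((hmp.integrable_comp_emb e.measurableEmbedding).2 hf)]
  simp only [e, MeasurableEquiv.piFinSuccAbove_symm_apply, Fin.insertNthEquiv, Fin.insertNth_zero,
    Equiv.coe_fn_mk, Fin.zero_succAbove, cast_eq]

noncomputable def phiFourierCoeff (n p : ℕ) (l : Fin n → ℤ) (a : Fin n → ℂ) : ℂ :=
  ∫ θ : Fin n → ℝ, phi n (fun j => a j * cexp (I * θ j)) ^ p
      * cexp (-I * ∑ j, (l j : ℂ) * (θ j : ℂ))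
    ∂Measure.pi fun _ => volume.restrict (Set.Icc 0 (2 * π))

theorem phiFourierCoeff_zero (p : ℕ) (l : Fin 0 → ℤ) (a : Fin 0 → ℂ) :
    phiFourierCoeff 0 p l a = 0 ^ p := by
  simp [phiFourierCoeff, phi, measureReal_def]

theorem integrable_phi_pow_mul_exp {n : ℕ} (p : ℕ) (l : Fin n → ℤ) {a : Fin n → ℂ}
    (ha : ∀ j, ‖a j‖ ≤ 1) :
    Integrable (fun θ : Fin n → ℝ => phi n (fun j => a j * cexp (I * θ j)) ^ p
      * cexp (-I * ∑ j, (l j : ℂ) * (θ j : ℂ)))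
      (Measure.pi fun _ => volume.restrict (Set.Icc 0 (2 * π))) := by
  refine Integrable.of_bound (Measurable.aestronglyMeasurable ?_) 1 (ae_of_all _ fun θ => ?_)
  · exact ((measurable_phi n).comp (by fun_prop)).pow_const p |>.mul (by fun_prop)
  have hexp : ‖cexp (-I * ∑ j, (l j : ℂ) * (θ j : ℂ))‖ = 1 := by
    rw [norm_exp]; simp
  rw [norm_mul, norm_pow, hexp, mul_one]
  refine pow_le_one₀ (norm_nonneg _) (norm_phi_le_one fun j => ?_)
  rw [norm_mul, norm_exp_I_mul_ofReal, mul_one]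
  exact ha j

theorem exists_phiFourierCoeff_succ {n : ℕ} (p : ℕ) (l : Fin (n + 1) → ℤ) {a : Fin (n + 1) → ℂ}
    (ha : ∀ j, ‖a j‖ < 1) :
    ∃ c : ℂ, (c ≠ 0 → l 0 ≤ p ∧ (p = 0 → l 0 = 0)) ∧
      phiFourierCoeff (n + 1) p l a
        = c * phiFourierCoeff n (p - l 0).toNat (Fin.tail l) (Fin.tail a) := by
  obtain ⟨c, hc, hint⟩ := exists_integral_mobius_pow_mul_exp (ha 0) p (l 0)
  refine ⟨c, hc, ?_⟩
  rw [phiFourierCoeff, integral_pi_fin_succ _ (integrable_phi_pow_mul_exp p l fun j => (ha j).le),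
    phiFourierCoeff, ← integral_const_mul]
  congr 1 with y
  have hsplit : ∀ x : ℝ,
      phi (n + 1) (fun j => a j * cexp (I * (Fin.cons x y : Fin (n + 1) → ℝ) j)) ^ p
        * cexp (-I * ∑ j, (l j : ℂ) * ((Fin.cons x y : Fin (n + 1) → ℝ) j : ℂ))
      = mobius (a 0 * cexp (I * x)) (phi n fun j => Fin.tail a j * cexp (I * y j)) ^ p
        * cexp (-I * (l 0 * x)) * cexp (-I * ∑ j, (Fin.tail l j : ℂ) * (y j : ℂ)) := fun x => by
    rw [Fin.sum_univ_succ, mul_add, exp_add, ← mul_assoc]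
    simp [phi, Fin.tail_def]
  simp_rw [hsplit, integral_mul_const]
  rw [hint _ (norm_phi_le_one fun j => ?_)]
  · ring
  · rw [norm_mul, norm_exp_I_mul_ofReal, mul_one]
    exact (ha j.succ).le

def partialSum {n : ℕ} (l : Fin n → ℤ) (j : ℕ) : ℤ :=
  ∑ i ∈ Finset.range j, if h : i < n then l ⟨i, h⟩ else 0

theorem partialSum_zero {n : ℕ} (l : Fin n → ℤ) : partialSum l 0 = 0 := rfl

theorem partialSum_succ {n : ℕ} (l : Fin (n + 1) → ℤ) (j : ℕ) :
    partialSum l (j + 1) = l 0 + partialSum (Fin.tail l) j := by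
  rw [partialSum, Finset.sum_range_succ', add_comm, partialSum]
  congr 1
  refine Finset.sum_congr rfl fun i _ => ?_
  by_cases h : i < n
  · rw [dif_pos (by omega), dif_pos h]; rfl
  · rw [dif_neg (by omega), dif_neg h]

theorem partialSum_fin_zero (l : Fin 0 → ℤ) (j : ℕ) : partialSum l j = 0 :=
  Finset.sum_eq_zero fun i _ => dif_neg (Nat.not_lt_zero i)

-- Partial sums are constant beyond `n`, so `j` may range over all of `ℕ`.
def IsAdmissible {n : ℕ} (p : ℕ) (l : Fin n → ℤ) : Prop :=
  (∀ j, partialSum l j ≤ p) ∧ partialSum l n = p ∧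
    ∀ j, partialSum l j = p → partialSum l (j + 1) = p

theorem isAdmissible_fin_zero (l : Fin 0 → ℤ) : IsAdmissible 0 l := by
  simp [IsAdmissible, partialSum_fin_zero]

theorem IsAdmissible.of_tail {n p : ℕ} {l : Fin (n + 1) → ℤ} (h0 : l 0 ≤ p)
    (hp : p = 0 → l 0 = 0) (ht : IsAdmissible (p - l 0).toNat (Fin.tail l)) :
    IsAdmissible p l := by
  obtain ⟨hle, hn, hstep⟩ := ht
  have hN : (((p : ℤ) - l 0).toNat : ℤ) = p - l 0 := Int.toNat_of_nonneg (by omega)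
  refine ⟨fun j => ?_, ?_, fun j hj => ?_⟩
  · rcases j with _ | j
    · simp [partialSum_zero]
    · have := hle j; rw [partialSum_succ]; omega
  · rw [partialSum_succ]; omega
  · rcases j with _ | j
    · rw [partialSum_zero] at hj
      rw [partialSum_succ, partialSum_zero, hp (by omega)]; omega
    · rw [partialSum_succ] at hj ⊢
      have := hstep j (by omega); omega

theorem isAdmissible_of_phiFourierCoeff_ne_zero {n p : ℕ} {l : Fin n → ℤ} {a : Fin n → ℂ}
    (ha : ∀ j, ‖a j‖ < 1) (h : phiFourierCoeff n p l a ≠ 0) : IsAdmissible p l := by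
  induction n generalizing p with
  | zero =>
    rw [phiFourierCoeff_zero] at h
    obtain rfl : p = 0 := by by_contra hp; exact h (zero_pow hp)
    exact isAdmissible_fin_zero l
  | succ n ih =>
    obtain ⟨c, hc, hrec⟩ := exists_phiFourierCoeff_succ p l ha
    rw [hrec] at h
    obtain ⟨h0, hp⟩ := hc (left_ne_zero_of_mul h)
    exact .of_tail h0 hp (ih (fun j => ha j.succ) (right_ne_zero_of_mul h))

theorem statement15_general (n : ℕ) (l : Fin n → ℤ)
    (hg : ∃ r : Fin n → ℝ, (∀ j, 0 ≤ r j ∧ r j < 1) ∧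
      ((1 / (2 * Real.pi) ^ n : ℝ) •
        ∫ θ : Fin n → ℝ in Set.univ.pi fun _ => Set.Icc (0 : ℝ) (2 * Real.pi),
          PsiList (List.ofFn fun j : Fin n =>
              ((r j : ℂ) * Complex.exp (Complex.I * (θ j : ℂ)), 1)) *
            Complex.exp (-Complex.I * ∑ j : Fin n, (l j : ℂ) * (θ j : ℂ))) ≠ 0) :
    (∀ j : ℕ, 1 ≤ j → j ≤ n →
      (∑ i ∈ Finset.range j, if h : i < n then l ⟨i, h⟩ else 0) ≤ 1) ∧
    (∑ i ∈ Finset.range n, if h : i < n then l ⟨i, h⟩ else 0) = 1 ∧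
    (∀ j : ℕ, 1 ≤ j → j ≤ n - 1 →
      (∑ i ∈ Finset.range j, if h : i < n then l ⟨i, h⟩ else 0) = 1 →
      (∑ i ∈ Finset.range (j + 1), if h : i < n then l ⟨i, h⟩ else 0) = 1) := by
  obtain ⟨r, hr, hne⟩ := hg
  have hcoeff : phiFourierCoeff n 1 l (fun j => r j) ≠ 0 := by
    simpa only [phiFourierCoeff, pow_one, psiList_ofFn_eq_phi, volume_pi, Measure.restrict_pi_pi]
      using right_ne_zero_of_smul hne
  have hr' : ∀ j, ‖(r j : ℂ)‖ < 1 := fun j => by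
    rw [norm_real, Real.norm_of_nonneg (hr j).1]; exact (hr j).2
  obtain ⟨hle, hsum, hstep⟩ := isAdmissible_of_phiFourierCoeff_ne_zero hr' hcoeff
  exact ⟨fun j _ _ => hle j, hsum, fun j _ _ => hstep j⟩

/-- let `n ≥ 1` and `l ∈ ℤⁿ`, and for `r ∈ [0,1)ⁿ` let `g_l(r)` be the
`l`-th Fourier coefficient in the angular variables `θ` of
`θ ↦ Ψ((r₁e^{iθ₁},…,rₙe^{iθₙ}),(1,…,1))`.  If `g_l(r) ≠ 0` for some `r ∈ [0,1)ⁿ`, then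
(i) `l₁ + ⋯ + l_j ≤ 1` for all `1 ≤ j ≤ n`; (ii) `l₁ + ⋯ + lₙ = 1`; and (iii) for
`1 ≤ j ≤ n-1`, if `l₁ + ⋯ + l_j = 1` then `l₁ + ⋯ + l_{j+1} = 1`. -/
theorem statement15 (n : ℕ) (hn : 1 ≤ n) (l : Fin n → ℤ)
    (hg : ∃ r : Fin n → ℝ, (∀ j, 0 ≤ r j ∧ r j < 1) ∧
      ((1 / (2 * Real.pi) ^ n : ℝ) •
        ∫ θ : Fin n → ℝ in Set.univ.pi fun _ => Set.Icc (0 : ℝ) (2 * Real.pi),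
          PsiList (List.ofFn fun j : Fin n =>
              ((r j : ℂ) * Complex.exp (Complex.I * (θ j : ℂ)), 1)) *
            Complex.exp (-Complex.I * ∑ j : Fin n, (l j : ℂ) * (θ j : ℂ))) ≠ 0) :
    (∀ j : ℕ, 1 ≤ j → j ≤ n →
      (∑ i ∈ Finset.range j, if h : i < n then l ⟨i, h⟩ else 0) ≤ 1) ∧
    (∑ i ∈ Finset.range n, if h : i < n then l ⟨i, h⟩ else 0) = 1 ∧
    (∀ j : ℕ, 1 ≤ j → j ≤ n - 1 →
      (∑ i ∈ Finset.range j, if h : i < n then l ⟨i, h⟩ else 0) = 1 →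
      (∑ i ∈ Finset.range (j + 1), if h : i < n then l ⟨i, h⟩ else 0) = 1) :=
  statement15_general n l hg
end
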